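/- In the lower-bound instance for strategyproofness with parameter l, the optimal execution performs exactly l² + l exchanges, and any execution in which every agent receives at most one item performs at most 2l exchanges; hence any algorithm that allocates each agent at most one item has approximation ratio at least (l+1)/2 on this instance. -/

import Mathlib

structure TState (N M : Type) where
  own : N → Finset M
  dem : N → Finset M

variable {N M : Type} [DecidableEq N] [DecidableEq M]

/-- In a trading cycle `c = [(i₁,j₁),…,(i_k,j_k)]`, agent `i_t` receives item `j_t`;
`gives c` pairs each agent with the item he gives, namely `j_{t-1}` (cyclically). -/
def gives (c : List (N × M)) : List (N × M) :=
  (c.map Prod.fst).zip ((c.rotate (c.length - 1)).map Prod.snd)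

/-- A valid cycle step: nonempty, visits each agent and each item at most once,
every participating agent receives an item he currently demands and gives an item
he currently owns. -/
def ValidCycle (s : TState N M) (c : List (N × M)) : Prop :=
  c ≠ [] ∧ (c.map Prod.fst).Nodup ∧ (c.map Prod.snd).Nodup ∧
    (∀ p ∈ c, p.2 ∈ s.dem p.1) ∧ (∀ p ∈ gives c, p.2 ∈ s.own p.1)

/-- The state after executing a cycle: every used demand edge is reversed into a
supply edge (the received item moves into the agent's supply and leaves his demand),
and every used supply edge is removed. -/
def stepCycle (s : TState N M) (c : List (N × M)) : TState N M where
  own i := ((s.own i).filter fun j => (i, j) ∉ gives c) ∪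
      ((c.filter fun p => decide (p.1 = i)).map Prod.snd).toFinset
  dem i := (s.dem i).filter fun j => (i, j) ∉ c

/-- An execution is a sequence of cycle steps, each valid in the successively
updated state. -/
def ValidExec (s : TState N M) : List (List (N × M)) → Prop
  | [] => True
  | c :: r => ValidCycle s c ∧ ValidExec (stepCycle s c) r

/-- Total number of exchanges (items received) in an execution. -/
def exchanges (r : List (List (N × M))) : ℕ := (r.map List.length).sum

/-- Number of items agent `i` receives during execution `r`. -/
def receivedCount (r : List (List (N × M))) (i : N) : ℕ :=
  (r.map fun c => c.countP fun p => decide (p.1 = i)).sum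

/-- Number of items agent `i` gives during execution `r`. -/
def givenCount (r : List (List (N × M))) (i : N) : ℕ :=
  (r.map fun c => (gives c).countP fun p => decide (p.1 = i)).sum

/-- A static execution allocates each item at most once. -/
def StaticExec (r : List (List (N × M))) : Prop := (r.flatten.map Prod.snd).Nodup

/-- Agents of the lower-bound instance: `Sum.inl k` is `i_k ∈ N`,
`Sum.inr (Sum.inl k)` is `i'_k ∈ N'`, and `Sum.inr (Sum.inr (k,t))` is the `t`-th
path agent of the `k`-th path. -/
abbrev LBAg (l P : ℕ) := Fin l ⊕ (Fin l ⊕ Fin l × Fin P)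

/-- Items: `Sum.inl k` is `j_k ∈ M`, `Sum.inr (Sum.inl k)` is `j'_k ∈ M'`, and
`Sum.inr (Sum.inr (k,t))` is the `t`-th path item of the `k`-th path. -/
abbrev LBIt (l P : ℕ) := Fin l ⊕ (Fin l ⊕ Fin l × Fin P)

/-- Supply sets: `i_k` owns `j'_k`, `i'_k` owns `j_k`, path agent `(k,t)` owns path
item `(k,t)`. -/
def LBS (l P : ℕ) : LBAg l P → Finset (LBIt l P)
  | .inl k => {.inr (.inl k)}
  | .inr (.inl k) => {.inl k}
  | .inr (.inr (k, t)) => {.inr (.inr (k, t))}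

/-- Demand sets: `i_k` demands all of `M`, `i'_k` demands only `j'_k`, and path
agent `(k,t)` demands the next item on its path (ending at `j'_k`). -/
def LBD (l P : ℕ) : LBAg l P → Finset (LBIt l P)
  | .inl _ => Finset.univ.image Sum.inl
  | .inr (.inl k) => {.inr (.inl k)}
  | .inr (.inr (k, t)) =>
      if h : t.val + 1 < P then {.inr (.inr (k, ⟨t.val + 1, h⟩))} else {.inr (.inl k)}

/-!
Path agents never trade: a path agent can only give away its own path item, which only its
predecessor on the path demands, so a cycle through a path agent would have to run backwards
along the path past its first item, which nobody demands. Hence only the agents of `N ∪ N'`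
receive items, and since a received item leaves the receiver's demand set, agent `i` receives at
most `|D_i|` items: `l` for `i_k` and one for `i'_k`. This gives `l² + l` exchanges in general and
`2l` when nobody receives more than one item. The bound `l² + l` is attained by the swaps
`j_k ↔ j'_k` followed by `l - 1` rounds in which each `i_k` hands its current item `j_{k+m}` on
to `i_{k-1}`.
-/

attribute [ext] TState

theorem map_fst_gives {N M : Type} (c : List (N × M)) :
    (gives c).map Prod.fst = c.map Prod.fst :=
  List.map_fst_zip (by simp)

theorem map_snd_gives {N M : Type} (c : List (N × M)) :
    (gives c).map Prod.snd = (c.rotate (c.length - 1)).map Prod.snd :=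
  List.map_snd_zip (by simp)

theorem exists_mem_snd_eq_of_mem_gives {N M : Type} {c : List (N × M)} {p : N × M}
    (h : p ∈ gives c) : ∃ q ∈ c, q.2 = p.2 := by
  have : p.2 ∈ (c.rotate (c.length - 1)).map Prod.snd := map_snd_gives c ▸ List.mem_map_of_mem h
  simpa [List.mem_rotate] using this

theorem exists_mem_gives_fst_eq {N M : Type} {c : List (N × M)} {p : N × M} (h : p ∈ c) :
    ∃ q ∈ gives c, q.1 = p.1 := by
  have : p.1 ∈ (gives c).map Prod.fst := map_fst_gives c ▸ List.mem_map_of_mem h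
  simpa using this

theorem snd_eq_of_mem_of_nodup_fst {N M : Type} {c : List (N × M)} (hc : (c.map Prod.fst).Nodup)
    {i : N} {j j' : M} (h : (i, j) ∈ c) (h' : (i, j') ∈ c) : j = j' :=
  congrArg Prod.snd (List.inj_on_of_nodup_map hc h h' rfl)

theorem countP_fst_eq_le_one {N M : Type} [DecidableEq N] {c : List (N × M)}
    (hc : (c.map Prod.fst).Nodup) (i : N) : c.countP (fun p => decide (p.1 = i)) ≤ 1 := by
  simpa [List.count, List.countP_map, Function.comp_def, Bool.beq_eq_decide_eq] using
    List.nodup_iff_count_le_one.1 hc i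

theorem sum_countP_fst_eq_length {N M : Type} [DecidableEq N] [Fintype N] (c : List (N × M)) :
    ∑ i : N, c.countP (fun p => decide (p.1 = i)) = c.length := by
  have (i : N) :
      c.countP (fun p => decide (p.1 = i)) = Multiset.count i (c.map Prod.fst : Multiset N) := by
    simp [List.count, List.countP_map, Function.comp_def, Bool.beq_eq_decide_eq]
  simp only [this]
  rw [Multiset.sum_count_eq_card (by simp)]
  simp

section stepCycle

variable {s : TState N M} {c : List (N × M)} {i : N} {j : M}

theorem mem_own_stepCycle :
    j ∈ (stepCycle s c).own i ↔ (j ∈ s.own i ∧ (i, j) ∉ gives c) ∨ (i, j) ∈ c := by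
  simp [stepCycle]

theorem mem_dem_stepCycle : j ∈ (stepCycle s c).dem i ↔ j ∈ s.dem i ∧ (i, j) ∉ c := by
  simp [stepCycle]

theorem dem_stepCycle_subset (s : TState N M) (c : List (N × M)) (i : N) :
    (stepCycle s c).dem i ⊆ s.dem i :=
  Finset.filter_subset _ _

theorem own_stepCycle_of_forall_ne (hi : ∀ p ∈ c, p.1 ≠ i) :
    (stepCycle s c).own i = s.own i := by
  have hgives : ∀ j, (i, j) ∉ gives c := fun j h => by
    have : i ∈ c.map Prod.fst := map_fst_gives c ▸ List.mem_map_of_mem (f := Prod.fst) h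
    obtain ⟨p, hp, rfl⟩ := List.mem_map.1 this
    exact hi p hp rfl
  ext j
  simp only [mem_own_stepCycle, hgives, not_false_eq_true, and_true, or_iff_left_iff_imp]
  exact fun h => absurd rfl (hi _ h)

theorem dem_stepCycle_of_forall_ne (hi : ∀ p ∈ c, p.1 ≠ i) :
    (stepCycle s c).dem i = s.dem i := by
  ext j
  simp only [mem_dem_stepCycle, and_iff_left_iff_imp]
  exact fun _ h => hi _ h rfl

theorem own_stepCycle_of_mem (hc : (c.map Prod.fst).Nodup) {j' : M} (hj : (i, j) ∈ c)
    (hj' : (i, j') ∈ gives c) : (stepCycle s c).own i = insert j ((s.own i).erase j') := by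
  have hgives : (gives c).map Prod.fst |>.Nodup := (map_fst_gives c).symm ▸ hc
  ext j₀
  simp only [mem_own_stepCycle, Finset.mem_insert, Finset.mem_erase]
  constructor
  · rintro (⟨hown, hg⟩ | h)
    · exact Or.inr ⟨fun h => hg (h ▸ hj'), hown⟩
    · exact Or.inl (snd_eq_of_mem_of_nodup_fst hc h hj)
  · rintro (rfl | ⟨hne, hown⟩)
    · exact Or.inr hj
    · exact Or.inl ⟨hown, fun h => hne (snd_eq_of_mem_of_nodup_fst hgives h hj')⟩

theorem dem_stepCycle_of_mem (hc : (c.map Prod.fst).Nodup) (hj : (i, j) ∈ c) :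
    (stepCycle s c).dem i = (s.dem i).erase j := by
  ext j₀
  simp only [mem_dem_stepCycle, Finset.mem_erase]
  constructor
  · rintro ⟨hdem, hj₀⟩
    exact ⟨fun h => hj₀ (h ▸ hj), hdem⟩
  · rintro ⟨hne, hdem⟩
    exact ⟨hdem, fun h => hne (snd_eq_of_mem_of_nodup_fst hc h hj)⟩

end stepCycle

theorem countP_fst_add_card_dem_stepCycle_le {s : TState N M} {c : List (N × M)}
    (hc : ValidCycle s c) (i : N) :
    c.countP (fun p => decide (p.1 = i)) + ((stepCycle s c).dem i).card ≤ (s.dem i).card := by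
  obtain ⟨-, hfst, -, hdem, -⟩ := hc
  by_cases hi : ∃ j, (i, j) ∈ c
  · obtain ⟨j, hj⟩ := hi
    have hj_dem : j ∈ s.dem i := hdem _ hj
    rw [dem_stepCycle_of_mem hfst hj, Finset.card_erase_of_mem hj_dem]
    have := countP_fst_eq_le_one hfst i
    have := Finset.card_pos.2 ⟨j, hj_dem⟩
    omega
  · simp only [not_exists] at hi
    have hne : ∀ p ∈ c, p.1 ≠ i := fun p hp h => hi p.2 (h ▸ hp)
    rw [List.countP_eq_zero.2 (by simpa using hne), dem_stepCycle_of_forall_ne hne, zero_add]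

theorem receivedCount_le_card_dem {s : TState N M} {r : List (List (N × M))}
    (hv : ValidExec s r) (i : N) : receivedCount r i ≤ (s.dem i).card := by
  induction r generalizing s with
  | nil => simp [receivedCount]
  | cons c r ih =>
    have := countP_fst_add_card_dem_stepCycle_le hv.1 i
    have := ih hv.2
    simp only [receivedCount, List.map_cons, List.sum_cons] at *
    omega

theorem exchanges_eq_sum_receivedCount {N M : Type} [DecidableEq N] [Fintype N]
    (r : List (List (N × M))) : exchanges r = ∑ i : N, receivedCount r i := by
  induction r with
  | nil => simp [exchanges, receivedCount]
  | cons c r ih =>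
    simp only [exchanges, receivedCount, List.map_cons, List.sum_cons, Finset.sum_add_distrib,
      sum_countP_fst_eq_length] at *
    rw [ih]

theorem exchanges_append {N M : Type} (a b : List (List (N × M))) :
    exchanges (a ++ b) = exchanges a + exchanges b := by
  simp [exchanges]

theorem validExec_append {s : TState N M} {a b : List (List (N × M))} :
    ValidExec s (a ++ b) ↔ ValidExec s a ∧ ValidExec (a.foldl stepCycle s) b := by
  induction a generalizing s with
  | nil => simp [ValidExec]
  | cons c a ih => simp [ValidExec, ih, and_assoc]

theorem validExec_and_foldl_eq_of_getElem {S : ℕ → TState N M} (cs : List (List (N × M)))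
    (hvalid : ∀ t (ht : t < cs.length), ValidCycle (S t) cs[t])
    (hstep : ∀ t (ht : t < cs.length), stepCycle (S t) cs[t] = S (t + 1)) :
    ValidExec (S 0) cs ∧ cs.foldl stepCycle (S 0) = S cs.length := by
  induction cs generalizing S with
  | nil => exact ⟨trivial, rfl⟩
  | cons c cs ih =>
    have h0 := hstep 0 (by simp)
    obtain ⟨hv, hf⟩ := ih (S := fun t => S (t + 1))
      (fun t ht => hvalid (t + 1) (by simpa using ht))
      (fun t ht => hstep (t + 1) (by simpa using ht))
    simp only [List.getElem_cons_zero] at h0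
    refine ⟨⟨hvalid 0 (by simp), h0 ▸ hv⟩, ?_⟩
    simpa [h0] using hf

section FinRange

open Fin.NatCast

theorem rotate_finRange (n : ℕ) [NeZero n] (m : ℕ) :
    (List.finRange n).rotate m = (List.finRange n).map (· + (m : Fin n)) := by
  apply List.ext_getElem (by simp)
  intro i h _
  simp only [List.getElem_rotate, List.getElem_finRange, List.getElem_map, List.length_finRange]
  ext
  simp [Fin.val_add, Nat.add_mod_mod]

theorem gives_map_finRange {N M : Type} {n : ℕ} [NeZero n] (f : Fin n → N × M) :
    gives ((List.finRange n).map f) =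
      (List.finRange n).map fun k => ((f k).1, (f (k + ((n - 1 : ℕ) : Fin n))).2) := by
  rw [gives, List.length_map, List.length_finRange, ← List.map_rotate, rotate_finRange,
    List.map_map, List.map_map, List.map_map, List.zip_map']
  rfl

end FinRange

section PathAgents

variable {l P : ℕ}

theorem exists_pred_of_pathItem_mem_LBD {k : Fin l} {t : Fin P} {i : LBAg l P}
    (h : (.inr (.inr (k, t)) : LBIt l P) ∈ LBD l P i) :
    ∃ t' : Fin P, t'.val + 1 = t.val ∧ i = .inr (.inr (k, t')) := by
  rcases i with k' | k' | ⟨k', t'⟩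
  · simp [LBD] at h
  · simp [LBD] at h
  · simp only [LBD] at h
    split at h
    · simp only [Finset.mem_singleton, Sum.inr.injEq, Prod.mk.injEq] at h
      obtain ⟨rfl, rfl⟩ := h
      exact ⟨t', rfl, rfl⟩
    · simp at h

def PathsIntact (s : TState (LBAg l P) (LBIt l P)) : Prop :=
  (∀ x : Fin l × Fin P, s.own (.inr (.inr x)) = {.inr (.inr x)}) ∧ ∀ i, s.dem i ⊆ LBD l P i

theorem pathsIntact_init : PathsIntact (⟨LBS l P, LBD l P⟩ : TState (LBAg l P) (LBIt l P)) :=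
  ⟨fun _ => rfl, fun _ => subset_rfl⟩

variable {s : TState (LBAg l P) (LBIt l P)}

theorem exists_pred_mem_of_pathAgent_mem (hs : PathsIntact s) {c : List (LBAg l P × LBIt l P)}
    (hc : ValidCycle s c) {k : Fin l} {t : Fin P} {p : LBAg l P × LBIt l P} (hp : p ∈ c)
    (hpk : p.1 = .inr (.inr (k, t))) :
    ∃ q ∈ c, ∃ t' : Fin P, t'.val + 1 = t.val ∧ q.1 = .inr (.inr (k, t')) := by
  obtain ⟨q, hq, hqp⟩ := exists_mem_gives_fst_eq hp
  have hq_own : q.2 ∈ s.own q.1 := hc.2.2.2.2 q hq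
  rw [hqp, hpk, hs.1, Finset.mem_singleton] at hq_own
  obtain ⟨q', hq', hq'q⟩ := exists_mem_snd_eq_of_mem_gives hq
  have hq'_dem : q'.2 ∈ s.dem q'.1 := hc.2.2.2.1 q' hq'
  rw [hq'q, hq_own] at hq'_dem
  exact ⟨q', hq', exists_pred_of_pathItem_mem_LBD (hs.2 _ hq'_dem)⟩

theorem pathAgent_not_mem_fst (hs : PathsIntact s) {c : List (LBAg l P × LBIt l P)}
    (hc : ValidCycle s c) (x : Fin l × Fin P) : ∀ p ∈ c, p.1 ≠ .inr (.inr x) := by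
  obtain ⟨k, t⟩ := x
  induction hn : t.val generalizing t with
  | zero =>
    intro p hp hpk
    obtain ⟨-, -, t', ht', -⟩ := exists_pred_mem_of_pathAgent_mem hs hc hp hpk
    omega
  | succ n ih =>
    intro p hp hpk
    obtain ⟨q, hq, t', ht', hqk⟩ := exists_pred_mem_of_pathAgent_mem hs hc hp hpk
    exact ih t' (by omega) q hq hqk

theorem PathsIntact.stepCycle (hs : PathsIntact s) {c : List (LBAg l P × LBIt l P)}
    (hc : ValidCycle s c) : PathsIntact (stepCycle s c) :=
  ⟨fun x => (own_stepCycle_of_forall_ne (pathAgent_not_mem_fst hs hc x)).trans (hs.1 x),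
    fun i => (dem_stepCycle_subset s c i).trans (hs.2 i)⟩

theorem receivedCount_pathAgent_eq_zero (hs : PathsIntact s)
    {r : List (List (LBAg l P × LBIt l P))} (hv : ValidExec s r) (x : Fin l × Fin P) :
    receivedCount r (.inr (.inr x)) = 0 := by
  induction r generalizing s with
  | nil => rfl
  | cons c r ih =>
    have hc0 : c.countP (fun p => decide (p.1 = .inr (.inr x))) = 0 :=
      List.countP_eq_zero.2 (by simpa using pathAgent_not_mem_fst hs hv.1 x)
    simp only [receivedCount, List.map_cons, List.sum_cons] at ih ⊢
    rw [hc0, ih (hs.stepCycle hv.1) hv.2]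

theorem exchanges_eq_sum_inl_add_sum_inr_inl {r : List (List (LBAg l P × LBIt l P))}
    (hv : ValidExec ⟨LBS l P, LBD l P⟩ r) :
    exchanges r = ∑ k, receivedCount r (.inl k) + ∑ k, receivedCount r (.inr (.inl k)) := by
  simp [exchanges_eq_sum_receivedCount, Fintype.sum_sum_type,
    receivedCount_pathAgent_eq_zero pathsIntact_init hv]

theorem exchanges_le_of_validExec {r : List (List (LBAg l P × LBIt l P))}
    (hv : ValidExec ⟨LBS l P, LBD l P⟩ r) : exchanges r ≤ l * l + l := by
  have hN (k : Fin l) : receivedCount r (.inl k) ≤ l := by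
    simpa [LBD, Finset.card_image_of_injective _ Sum.inl_injective] using
      receivedCount_le_card_dem hv (.inl k)
  have hN' (k : Fin l) : receivedCount r (.inr (.inl k)) ≤ 1 := by
    simpa [LBD] using receivedCount_le_card_dem hv (.inr (.inl k))
  calc exchanges r = ∑ k, receivedCount r (.inl k) + ∑ k, receivedCount r (.inr (.inl k)) :=
        exchanges_eq_sum_inl_add_sum_inr_inl hv
    _ ≤ ∑ _k : Fin l, l + ∑ _k : Fin l, 1 :=
        add_le_add (Finset.sum_le_sum fun k _ => hN k) (Finset.sum_le_sum fun k _ => hN' k)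
    _ = l * l + l := by simp

theorem exchanges_le_of_receivedCount_le_one {r : List (List (LBAg l P × LBIt l P))}
    (hv : ValidExec ⟨LBS l P, LBD l P⟩ r) (hone : ∀ i, receivedCount r i ≤ 1) :
    exchanges r ≤ 2 * l := by
  calc exchanges r = ∑ k, receivedCount r (.inl k) + ∑ k, receivedCount r (.inr (.inl k)) :=
        exchanges_eq_sum_inl_add_sum_inr_inl hv
    _ ≤ ∑ _k : Fin l, 1 + ∑ _k : Fin l, 1 :=
        add_le_add (Finset.sum_le_sum fun _ _ => hone _) (Finset.sum_le_sum fun _ _ => hone _)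
    _ = 2 * l := by simp [two_mul]

end PathAgents

section OptimalExecution

variable (l P : ℕ)

def swapCycle (k : Fin l) : List (LBAg l P × LBIt l P) :=
  [(.inl k, .inl k), (.inr (.inl k), .inr (.inl k))]

def swapState (t : ℕ) : TState (LBAg l P) (LBIt l P) where
  own
    | .inl k => if k.val < t then {.inl k} else {.inr (.inl k)}
    | .inr (.inl k) => if k.val < t then {.inr (.inl k)} else {.inl k}
    | .inr (.inr x) => {.inr (.inr x)}
  dem
    | .inl k => if k.val < t then (Finset.univ.image Sum.inl).erase (.inl k)
        else Finset.univ.image Sum.inl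
    | .inr (.inl k) => if k.val < t then ∅ else {.inr (.inl k)}
    | .inr (.inr x) => LBD l P (.inr (.inr x))

theorem swapState_zero : swapState l P 0 = ⟨LBS l P, LBD l P⟩ := by
  ext i : 2 <;> rcases i with k | k | x <;> simp [swapState, LBS, LBD]

theorem gives_swapCycle (k : Fin l) :
    gives (swapCycle l P k) = [(.inl k, .inr (.inl k)), (.inr (.inl k), .inl k)] :=
  rfl

theorem validCycle_swapCycle (k : Fin l) : ValidCycle (swapState l P k) (swapCycle l P k) := by
  refine ⟨by simp [swapCycle], by simp [swapCycle], by simp [swapCycle], ?_, ?_⟩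
  · simp [swapCycle, swapState]
  · simp [gives_swapCycle, swapState]

theorem stepCycle_swapCycle (k : Fin l) :
    stepCycle (swapState l P k) (swapCycle l P k) = swapState l P (k + 1) := by
  have hfst := (validCycle_swapCycle l P k).2.1
  have hlt {k' : Fin l} (hk : k' ≠ k) : k'.val < k.val + 1 ↔ k'.val < k.val := by
    have := Fin.val_ne_of_ne hk
    omega
  ext i : 2 <;> rcases i with k' | k' | x
  · obtain rfl | hk := eq_or_ne k' k
    · rw [own_stepCycle_of_mem hfst (j := .inl k') (j' := .inr (.inl k')) (by simp [swapCycle])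
        (by simp [gives_swapCycle])]
      simp [swapState]
    · rw [own_stepCycle_of_forall_ne (by simp [swapCycle, Ne.symm hk])]
      simp only [swapState, hlt hk]
  · obtain rfl | hk := eq_or_ne k' k
    · rw [own_stepCycle_of_mem hfst (j := .inr (.inl k')) (j' := .inl k') (by simp [swapCycle])
        (by simp [gives_swapCycle])]
      simp [swapState]
    · rw [own_stepCycle_of_forall_ne (by simp [swapCycle, Ne.symm hk])]
      simp only [swapState, hlt hk]
  · rw [own_stepCycle_of_forall_ne (by simp [swapCycle])]
    rfl
  · obtain rfl | hk := eq_or_ne k' k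
    · rw [dem_stepCycle_of_mem hfst (j := .inl k') (by simp [swapCycle])]
      simp [swapState]
    · rw [dem_stepCycle_of_forall_ne (by simp [swapCycle, Ne.symm hk])]
      simp only [swapState, hlt hk]
  · obtain rfl | hk := eq_or_ne k' k
    · rw [dem_stepCycle_of_mem hfst (j := .inr (.inl k')) (by simp [swapCycle])]
      simp [swapState]
    · rw [dem_stepCycle_of_forall_ne (by simp [swapCycle, Ne.symm hk])]
      simp only [swapState, hlt hk]
  · rw [dem_stepCycle_of_forall_ne (by simp [swapCycle])]
    rfl

section Rotation

open Fin.NatCast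

variable [NeZero l]

def rotationCycle (m : ℕ) : List (LBAg l P × LBIt l P) :=
  (List.finRange l).map fun k => (.inl k, .inl (k + ((m + 1 : ℕ) : Fin l)))

-- After `m` rounds `i_k` has received `j_k, …, j_{k+m}`, so it still demands `j_{k'}` exactly
-- when the offset `k' - k` (mod `l`) exceeds `m`.
def rotationState (m : ℕ) : TState (LBAg l P) (LBIt l P) where
  own
    | .inl k => {.inl (k + (m : Fin l))}
    | .inr (.inl k) => {.inr (.inl k)}
    | .inr (.inr x) => {.inr (.inr x)}
  dem
    | .inl k => (Finset.univ.filter fun k' : Fin l => m < (k' - k).val).image Sum.inl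
    | .inr (.inl _) => ∅
    | .inr (.inr x) => LBD l P (.inr (.inr x))

theorem swapState_eq_rotationState_zero : swapState l P l = rotationState l P 0 := by
  ext i j : 3 <;> rcases i with k | k | x <;> rcases j with k' | j <;>
    simp [swapState, rotationState, Fin.pos_iff_ne_zero', sub_ne_zero]

theorem mem_rotationCycle {m : ℕ} {p : LBAg l P × LBIt l P} :
    p ∈ rotationCycle l P m ↔
      ∃ k : Fin l, p = (.inl k, .inl (k + ((m + 1 : ℕ) : Fin l))) := by
  simp [rotationCycle, eq_comm]

theorem gives_rotationCycle (m : ℕ) :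
    gives (rotationCycle l P m) =
      (List.finRange l).map fun k => (.inl k, .inl (k + (m : Fin l))) := by
  rw [rotationCycle, gives_map_finRange]
  refine List.map_congr_left fun k _ => ?_
  have : ((l - 1 : ℕ) : Fin l) + ((m + 1 : ℕ) : Fin l) = m := by
    rw [← Nat.cast_add, show l - 1 + (m + 1) = l + m by have := NeZero.pos l; omega,
      Nat.cast_add, Fin.natCast_self, zero_add]
  simp only [add_assoc, this]

theorem validCycle_rotationCycle {m : ℕ} (hm : m + 1 < l) :
    ValidCycle (rotationState l P m) (rotationCycle l P m) := by
  refine ⟨?_, ?_, ?_, ?_, ?_⟩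
  · simp [rotationCycle, NeZero.ne]
  · simpa [rotationCycle, Function.comp_def] using (List.nodup_finRange l).map Sum.inl_injective
  · simpa [rotationCycle, Function.comp_def] using
      (List.nodup_finRange l).map (Sum.inl_injective.comp (add_left_injective _))
  · intro p hp
    obtain ⟨k, rfl⟩ := (mem_rotationCycle l P).1 hp
    refine Finset.mem_image_of_mem _ (Finset.mem_filter.2 ⟨Finset.mem_univ _, ?_⟩)
    rw [add_sub_cancel_left, Fin.val_natCast, Nat.mod_eq_of_lt hm]
    omega
  · simp [gives_rotationCycle, rotationState]

theorem stepCycle_rotationCycle {m : ℕ} (hm : m + 1 < l) :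
    stepCycle (rotationState l P m) (rotationCycle l P m) = rotationState l P (m + 1) := by
  have hfst := (validCycle_rotationCycle l P hm).2.1
  have hmem (k : Fin l) : (.inl k, .inl (k + ((m + 1 : ℕ) : Fin l))) ∈ rotationCycle l P m :=
    (mem_rotationCycle l P).2 ⟨k, rfl⟩
  have hne (i : Fin l ⊕ Fin l × Fin P) : ∀ p ∈ rotationCycle l P m, p.1 ≠ .inr i := by
    simp [mem_rotationCycle]
  ext i : 2 <;> rcases i with k | i
  · rw [own_stepCycle_of_mem hfst (hmem k) (j' := .inl (k + (m : Fin l)))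
      (by simp [gives_rotationCycle])]
    simp [rotationState]
  · rw [own_stepCycle_of_forall_ne (hne i)]
    rcases i with k | x <;> rfl
  · rw [dem_stepCycle_of_mem hfst (hmem k)]
    ext j
    rcases j with k' | j
    · have key : k' = k + ((m + 1 : ℕ) : Fin l) ↔ (k' - k).val = m + 1 := by
        rw [← sub_eq_iff_eq_add', Fin.ext_iff, Fin.val_natCast, Nat.mod_eq_of_lt hm]
      simp only [rotationState, Finset.mem_erase, Finset.mem_image, Finset.mem_filter,
        Finset.mem_univ, true_and, Sum.inl.injEq, exists_eq_right, ne_eq, key]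
      omega
    · simp [rotationState]
  · rw [dem_stepCycle_of_forall_ne (hne i)]
    rcases i with k | x <;> rfl

def optimalExecution : List (List (LBAg l P × LBIt l P)) :=
  (List.finRange l).map (swapCycle l P) ++ (List.range (l - 1)).map (rotationCycle l P)

theorem validExec_optimalExecution : ValidExec ⟨LBS l P, LBD l P⟩ (optimalExecution l P) := by
  obtain ⟨hswaps, hfold⟩ := validExec_and_foldl_eq_of_getElem (S := swapState l P)
    ((List.finRange l).map (swapCycle l P))
    (fun t ht => by simpa using validCycle_swapCycle l P ⟨t, by simpa using ht⟩)
    (fun t ht => by simpa using stepCycle_swapCycle l P ⟨t, by simpa using ht⟩)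
  have hround {t : ℕ} (ht : t < ((List.range (l - 1)).map (rotationCycle l P)).length) :
      t + 1 < l := by
    rw [List.length_map, List.length_range] at ht
    omega
  obtain ⟨hrounds, -⟩ := validExec_and_foldl_eq_of_getElem (S := rotationState l P)
    ((List.range (l - 1)).map (rotationCycle l P))
    (fun t ht => by simpa using validCycle_rotationCycle l P (hround ht))
    (fun t ht => by simpa using stepCycle_rotationCycle l P (hround ht))
  rw [← swapState_zero, optimalExecution, validExec_append]
  refine ⟨hswaps, ?_⟩
  rwa [hfold, List.length_map, List.length_finRange, swapState_eq_rotationState_zero]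

theorem exchanges_optimalExecution : exchanges (optimalExecution l P) = l * l + l := by
  have hswaps : exchanges ((List.finRange l).map (swapCycle l P)) = 2 * l := by
    simp [exchanges, swapCycle, Function.comp_def, mul_comm]
  have hrounds : exchanges ((List.range (l - 1)).map (rotationCycle l P)) = (l - 1) * l := by
    simp [exchanges, rotationCycle, Function.comp_def]
  obtain ⟨n, rfl⟩ : ∃ n, l = n + 1 := Nat.exists_eq_succ_of_ne_zero (NeZero.ne l)
  rw [optimalExecution, exchanges_append, hswaps, hrounds, Nat.add_sub_cancel]
  ring

end Rotation

end OptimalExecution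

/-- In the lower-bound instance (with path length
`P = ((l+1)/2)(l²+l)`), the optimal execution performs exactly `l² + l` exchanges,
any execution in which every agent receives at most one item performs at most `2l`
exchanges, and hence the ratio is at least `(l+1)/2`. -/
theorem stmt11 (l : ℕ) (hl : 1 ≤ l) :
    (∃ r : List (List (LBAg l (((l + 1) * (l * l + l)) / 2) ×
        LBIt l (((l + 1) * (l * l + l)) / 2))),
      ValidExec ⟨LBS l _, LBD l _⟩ r ∧ exchanges r = l * l + l) ∧
    (∀ r : List (List (LBAg l (((l + 1) * (l * l + l)) / 2) ×
        LBIt l (((l + 1) * (l * l + l)) / 2))),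
      ValidExec ⟨LBS l _, LBD l _⟩ r → exchanges r ≤ l * l + l) ∧
    (∀ r : List (List (LBAg l (((l + 1) * (l * l + l)) / 2) ×
        LBIt l (((l + 1) * (l * l + l)) / 2))),
      ValidExec ⟨LBS l _, LBD l _⟩ r → (∀ i, receivedCount r i ≤ 1) →
        exchanges r ≤ 2 * l) ∧
    2 * (l * l + l) = (l + 1) * (2 * l) := by
  have : NeZero l := ⟨by omega⟩
  exact ⟨⟨optimalExecution l _, validExec_optimalExecution l _,
      exchanges_optimalExecution l _⟩,
    fun _ hv => exchanges_le_of_validExec hv,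
    fun _ hv hone => exchanges_le_of_receivedCount_le_one hv hone, by ring⟩
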